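/- Let W, Z_q, Z_e, X, X' be random variables with finite ranges on a common finite probability space. Assume: (independence) I(W ; (Z_q, Z_e)) = 0; (minimum key storage) H(Z_q) ≤ H(W) and H(Z_e) ≤ H(W); (for a qualified set containing q but not e) H(W | (X, Z_q)) = 0 and I(W ; (X, Z_e)) = 0; and (for a qualified set containing e but not q) H(W | (X', Z_e)) = 0 and I(W ; (X', Z_q)) = 0. Then H(Z_q) = H(Z_e) = H(W) and H(Z_q, Z_e) = 2 · H(W); in particular Z_q and Z_e are independent. -/
import Mathlib


open scoped BigOperators

/-- A finite probability space: a finite sample space `Ω` together with a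
probability mass function `p`. -/
structure FinProbSpace : Type 1 where
  Ω : Type
  fin : Fintype Ω
  p : Ω → ℝ
  nonneg : ∀ ω, 0 ≤ p ω
  sum_one : Finset.sum fin.elems p = 1

namespace FinProbSpace

/-- Probability that the random variable `X` takes the value `s`. -/
noncomputable def prob (μ : FinProbSpace) {S : Type} [DecidableEq S]
    (X : μ.Ω → S) (s : S) : ℝ :=
  letI := μ.fin
  ∑ ω : μ.Ω, if X ω = s then μ.p ω else 0

/-- Shannon entropy of a random variable with finite range. -/
noncomputable def H (μ : FinProbSpace) {S : Type} [Fintype S] [DecidableEq S]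
    (X : μ.Ω → S) : ℝ :=
  ∑ s : S, Real.negMulLog (μ.prob X s)

/-- Conditional Shannon entropy `H(X | Y)`. -/
noncomputable def Hc (μ : FinProbSpace) {S T : Type} [Fintype S] [DecidableEq S]
    [Fintype T] [DecidableEq T] (X : μ.Ω → S) (Y : μ.Ω → T) : ℝ :=
  μ.H (fun ω => (X ω, Y ω)) - μ.H Y

/-- Mutual information `I(X ; Y)`. -/
noncomputable def MI (μ : FinProbSpace) {S T : Type} [Fintype S] [DecidableEq S]
    [Fintype T] [DecidableEq T] (X : μ.Ω → S) (Y : μ.Ω → T) : ℝ :=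
  μ.H X + μ.H Y - μ.H (fun ω => (X ω, Y ω))

/-- Conditional mutual information `I(X ; Y | Z)`. -/
noncomputable def CMI (μ : FinProbSpace) {S T U : Type} [Fintype S] [DecidableEq S]
    [Fintype T] [DecidableEq T] [Fintype U] [DecidableEq U]
    (X : μ.Ω → S) (Y : μ.Ω → T) (Z : μ.Ω → U) : ℝ :=
  μ.H (fun ω => (X ω, Z ω)) + μ.H (fun ω => (Y ω, Z ω))
    - μ.H (fun ω => (X ω, Y ω, Z ω)) - μ.H Z

/-- Independence of two random variables: the joint pmf factorizes. -/
def IndepRV (μ : FinProbSpace) {S T : Type} [DecidableEq S] [DecidableEq T]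
    (X : μ.Ω → S) (Y : μ.Ω → T) : Prop :=
  ∀ s t, μ.prob (fun ω => (X ω, Y ω)) (s, t) = μ.prob X s * μ.prob Y t

end FinProbSpace

open FinProbSpace

/-! ### Auxiliary lemmas -/

variable {S T U : Type}

lemma prob_nonneg (μ : FinProbSpace) [DecidableEq S] (X : μ.Ω → S) (s : S) : 0 ≤ μ.prob X s := by
  letI := μ.fin
  exact Finset.sum_nonneg fun ω _ => by by_cases h : X ω = s <;> simp [prob, h, μ.nonneg ω]

lemma sum_prob (μ : FinProbSpace) [Fintype S] [DecidableEq S] (X : μ.Ω → S) : ∑ s : S, μ.prob X s = 1 := by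
  letI := μ.fin
  unfold FinProbSpace.prob
  rw [Finset.sum_comm]
  have h : ∀ ω : μ.Ω, ∑ s : S, (if X ω = s then μ.p ω else 0) = μ.p ω := fun ω => by simp
  rw [Finset.sum_congr rfl fun ω _ => h ω]
  exact μ.sum_one

lemma prob_map (μ : FinProbSpace) {f : S → T} (hf : Function.Injective f) [DecidableEq S] [DecidableEq T]
    (X : μ.Ω → S) (s : S) : μ.prob (fun ω => f (X ω)) (f s) = μ.prob X s := by
  letI := μ.fin
  unfold FinProbSpace.prob
  exact Finset.sum_congr rfl fun ω _ => by simp [hf.eq_iff]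

lemma H_map (μ : FinProbSpace) {f : S → T} (hf : Function.Injective f) [Fintype S] [DecidableEq S]
    [Fintype T] [DecidableEq T] (X : μ.Ω → S) :
    μ.H (fun ω => f (X ω)) = μ.H X := by
  letI := μ.fin
  unfold FinProbSpace.H
  rw [← Finset.sum_subset (Finset.subset_univ ((Finset.univ : Finset S).image f))]
  · rw [Finset.sum_image (fun a _ b _ h => hf h)]
    exact Finset.sum_congr rfl fun s _ => by rw [prob_map μ hf]
  · intro t _ ht
    have h0 : μ.prob (fun ω => f (X ω)) t = 0 := by
      unfold FinProbSpace.prob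
      refine Finset.sum_eq_zero fun ω _ => ?_
      have : f (X ω) ≠ t := fun h => ht (Finset.mem_image.2 ⟨X ω, Finset.mem_univ _, h⟩)
      simp [this]
    simp [h0]

lemma prob_snd_eq_sum (μ : FinProbSpace) [Fintype S] [DecidableEq S] [DecidableEq T]
    (X : μ.Ω → S) (Y : μ.Ω → T) (t : T) :
    μ.prob Y t = ∑ s : S, μ.prob (fun ω => (X ω, Y ω)) (s, t) := by
  letI := μ.fin
  unfold FinProbSpace.prob
  rw [Finset.sum_comm]
  refine Finset.sum_congr rfl fun ω _ => ?_
  by_cases h : Y ω = t <;> simp [Prod.ext_iff, h]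

lemma prob_fst_eq_sum (μ : FinProbSpace) [DecidableEq S] [Fintype T] [DecidableEq T]
    (X : μ.Ω → S) (Y : μ.Ω → T) (s : S) :
    μ.prob X s = ∑ t : T, μ.prob (fun ω => (X ω, Y ω)) (s, t) := by
  letI := μ.fin
  unfold FinProbSpace.prob
  rw [Finset.sum_comm]
  refine Finset.sum_congr rfl fun ω _ => ?_
  by_cases h : X ω = s <;> simp [Prod.ext_iff, h]

lemma negMulLog_sum_le {ι : Type} [Fintype ι] (a : ι → ℝ) (ha : ∀ i, 0 ≤ a i) :
    Real.negMulLog (∑ i, a i) ≤ ∑ i, Real.negMulLog (a i) := by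
  have key : Real.negMulLog (∑ i, a i) = ∑ i, -(a i * Real.log (∑ j, a j)) := by
    simp only [Real.negMulLog, neg_mul]
    rw [Finset.sum_neg_distrib, ← Finset.sum_mul]
  rw [key]
  refine Finset.sum_le_sum fun i _ => ?_
  rcases eq_or_lt_of_le (ha i) with h | h
  · simp [← h, Real.negMulLog]
  · have hs : a i ≤ ∑ j, a j := Finset.single_le_sum (fun j _ => ha j) (Finset.mem_univ i)
    have hlog : Real.log (a i) ≤ Real.log (∑ j, a j) := Real.log_le_log h hs
    have := mul_le_mul_of_nonneg_left hlog (ha i)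
    simp only [Real.negMulLog, neg_mul]
    linarith

lemma H_mono_right (μ : FinProbSpace) {S T : Type} [Fintype S] [DecidableEq S]
    [Fintype T] [DecidableEq T] (X : μ.Ω → S) (Y : μ.Ω → T) :
    μ.H Y ≤ μ.H (fun ω => (X ω, Y ω)) := by
  unfold FinProbSpace.H
  rw [Fintype.sum_prod_type, Finset.sum_comm]
  refine Finset.sum_le_sum fun t _ => ?_
  rw [prob_snd_eq_sum μ X Y t]
  exact negMulLog_sum_le _ fun s => prob_nonneg μ _ _

lemma gibbs {ι : Type} [Fintype ι] (P Q : ι → ℝ) (hP : ∀ i, 0 ≤ P i) (hQ : ∀ i, 0 ≤ Q i)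
    (hPQ : ∀ i, P i ≠ 0 → Q i ≠ 0) (hs : ∑ i, Q i ≤ ∑ i, P i) :
    ∑ i, Real.negMulLog (P i) ≤ ∑ i, -(P i * Real.log (Q i)) := by
  have term : ∀ i, P i * Real.log (Q i) - P i * Real.log (P i) ≤ Q i - P i := by
    intro i
    rcases eq_or_lt_of_le (hP i) with h | hp
    · simp [← h, hQ i]
    · have hq : 0 < Q i := lt_of_le_of_ne (hQ i) (Ne.symm (hPQ i (ne_of_gt hp)))
      have h1 : Real.log (Q i) - Real.log (P i) = Real.log (Q i / P i) :=
        (Real.log_div (ne_of_gt hq) (ne_of_gt hp)).symm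
      have h2 : Real.log (Q i / P i) ≤ Q i / P i - 1 :=
        Real.log_le_sub_one_of_pos (div_pos hq hp)
      have h3 := mul_le_mul_of_nonneg_left h2 (hP i)
      have h4 : P i * (Q i / P i - 1) = Q i - P i := by field_simp
      nlinarith [h3, h4, h1]
  have hsum := Finset.sum_le_sum fun i (_ : i ∈ Finset.univ) => term i
  rw [Finset.sum_sub_distrib, Finset.sum_sub_distrib] at hsum
  have : ∑ i, Real.negMulLog (P i) = -∑ i, P i * Real.log (P i) := by
    simp [Real.negMulLog, neg_mul, Finset.sum_neg_distrib]
  rw [this]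
  have : ∑ i, -(P i * Real.log (Q i)) = -∑ i, P i * Real.log (Q i) := by
    simp [Finset.sum_neg_distrib]
  rw [this]
  linarith
lemma H_submod (μ : FinProbSpace) {SA SB SC : Type}
    [Fintype SA] [DecidableEq SA] [Fintype SB] [DecidableEq SB]
    [Fintype SC] [DecidableEq SC] (A : μ.Ω → SA) (B : μ.Ω → SB) (C : μ.Ω → SC) :
    μ.H (fun ω => ((A ω, B ω), C ω)) + μ.H C
      ≤ μ.H (fun ω => (A ω, C ω)) + μ.H (fun ω => (B ω, C ω)) := by
  classical
  letI := μ.fin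
  set P : (SA × SB) × SC → ℝ := μ.prob (fun ω => ((A ω, B ω), C ω)) with hPdef
  have hPnn : ∀ i, 0 ≤ P i := fun i => prob_nonneg μ _ i
  have mAC : ∀ a c, μ.prob (fun ω => (A ω, C ω)) (a, c) = ∑ b, P ((a, b), c) := by
    intro a c
    simp only [hPdef]
    unfold FinProbSpace.prob
    rw [Finset.sum_comm]
    refine Finset.sum_congr rfl fun ω _ => ?_
    by_cases h1 : A ω = a <;> by_cases h2 : C ω = c <;> simp [Prod.ext_iff, h1, h2]
  have mBC : ∀ b c, μ.prob (fun ω => (B ω, C ω)) (b, c) = ∑ a, P ((a, b), c) := by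
    intro b c
    simp only [hPdef]
    unfold FinProbSpace.prob
    rw [Finset.sum_comm]
    refine Finset.sum_congr rfl fun ω _ => ?_
    by_cases h1 : B ω = b <;> by_cases h2 : C ω = c <;> simp [Prod.ext_iff, h1, h2]
  have mC : ∀ c, μ.prob C c = ∑ a, ∑ b, P ((a, b), c) := by
    intro c
    rw [prob_snd_eq_sum μ (fun ω => (A ω, B ω)) C c, Fintype.sum_prod_type]
  have mCA : ∀ c, μ.prob C c = ∑ a, μ.prob (fun ω => (A ω, C ω)) (a, c) := fun c =>
    prob_snd_eq_sum μ A C c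
  have mCB : ∀ c, μ.prob C c = ∑ b, μ.prob (fun ω => (B ω, C ω)) (b, c) := fun c =>
    prob_snd_eq_sum μ B C c
  set Q : (SA × SB) × SC → ℝ := fun i =>
    μ.prob (fun ω => (A ω, C ω)) (i.1.1, i.2) * μ.prob (fun ω => (B ω, C ω)) (i.1.2, i.2)
      / μ.prob C i.2 with hQdef
  have hQnn : ∀ i, 0 ≤ Q i := fun i =>
    div_nonneg (mul_nonneg (prob_nonneg μ _ _) (prob_nonneg μ _ _)) (prob_nonneg μ _ _)
  have hPle : ∀ i, P i ≤ μ.prob (fun ω => (A ω, C ω)) (i.1.1, i.2)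
      ∧ P i ≤ μ.prob (fun ω => (B ω, C ω)) (i.1.2, i.2) ∧ P i ≤ μ.prob C i.2 := by
    rintro ⟨⟨a, b⟩, c⟩
    refine ⟨?_, ?_, ?_⟩
    · rw [mAC a c]
      exact Finset.single_le_sum (f := fun b' => P ((a, b'), c)) (fun j _ => hPnn _)
        (Finset.mem_univ b)
    · rw [mBC b c]
      exact Finset.single_le_sum (f := fun a' => P ((a', b), c)) (fun j _ => hPnn _)
        (Finset.mem_univ a)
    · rw [mC c]
      calc P ((a, b), c) ≤ ∑ b', P ((a, b'), c) :=
            Finset.single_le_sum (f := fun b' => P ((a, b'), c)) (fun j _ => hPnn _)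
              (Finset.mem_univ b)
        _ ≤ ∑ a', ∑ b', P ((a', b'), c) := by
            refine Finset.single_le_sum (f := fun a' => ∑ b', P ((a', b'), c))
              (fun j _ => ?_) (Finset.mem_univ a)
            exact Finset.sum_nonneg fun j' _ => hPnn _
  have hPQ : ∀ i, P i ≠ 0 → Q i ≠ 0 := by
    intro i hPi
    have hp : 0 < P i := lt_of_le_of_ne (hPnn i) (Ne.symm hPi)
    obtain ⟨h1, h2, h3⟩ := hPle i
    have := div_pos (mul_pos (lt_of_lt_of_le hp h1) (lt_of_lt_of_le hp h2)) (lt_of_lt_of_le hp h3)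
    simpa [hQdef] using ne_of_gt this
  have hsumP : ∑ i, P i = 1 := sum_prob μ _
  have hsumQ : ∑ i, Q i ≤ ∑ i, P i := by
    rw [hsumP]
    have key : ∀ c : SC, (∑ a, ∑ b, Q ((a, b), c)) ≤ μ.prob C c := by
      intro c
      have e1 : (∑ a, ∑ b, Q ((a, b), c))
          = ((∑ a, μ.prob (fun ω => (A ω, C ω)) (a, c))
              * (∑ b, μ.prob (fun ω => (B ω, C ω)) (b, c))) * (μ.prob C c)⁻¹ := by
        simp only [hQdef, div_eq_mul_inv]
        rw [Finset.sum_mul_sum, Finset.sum_mul]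
        refine Finset.sum_congr rfl fun a _ => ?_
        rw [Finset.sum_mul]
      have : (∑ a, ∑ b, Q ((a, b), c))
          = (μ.prob C c * μ.prob C c) * (μ.prob C c)⁻¹ := by
        rw [e1, ← mCA c, ← mCB c]
      rw [this]
      rcases eq_or_ne (μ.prob C c) 0 with h | h
      · simp [h]
      · rw [mul_assoc, mul_inv_cancel₀ h, mul_one]
    calc ∑ i, Q i = ∑ c, ∑ a, ∑ b, Q ((a, b), c) := by
          rw [Fintype.sum_prod_type, Finset.sum_comm]
          exact Finset.sum_congr rfl fun c _ => by rw [Fintype.sum_prod_type]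
      _ ≤ ∑ c, μ.prob C c := Finset.sum_le_sum fun c _ => key c
      _ = 1 := sum_prob μ C
  have G := gibbs P Q hPnn hQnn hPQ (hsumP ▸ hsumQ)
  have expand : ∀ i, -(P i * Real.log (Q i))
      = -(P i * Real.log (μ.prob (fun ω => (A ω, C ω)) (i.1.1, i.2)))
        - P i * Real.log (μ.prob (fun ω => (B ω, C ω)) (i.1.2, i.2))
        + P i * Real.log (μ.prob C i.2) := by
    intro i
    rcases eq_or_ne (P i) 0 with h | h
    · simp [h]
    · have hp : 0 < P i := lt_of_le_of_ne (hPnn i) (Ne.symm h)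
      obtain ⟨h1, h2, h3⟩ := hPle i
      have hac : μ.prob (fun ω => (A ω, C ω)) (i.1.1, i.2) ≠ 0 :=
        ne_of_gt (lt_of_lt_of_le hp h1)
      have hbc : μ.prob (fun ω => (B ω, C ω)) (i.1.2, i.2) ≠ 0 :=
        ne_of_gt (lt_of_lt_of_le hp h2)
      have hc : μ.prob C i.2 ≠ 0 := ne_of_gt (lt_of_lt_of_le hp h3)
      rw [hQdef]
      rw [Real.log_div (mul_ne_zero hac hbc) hc, Real.log_mul hac hbc]
      ring
  have innerAC : ∀ a c, (∑ b, -(P ((a, b), c)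
        * Real.log (μ.prob (fun ω => (A ω, C ω)) (a, c))))
      = Real.negMulLog (μ.prob (fun ω => (A ω, C ω)) (a, c)) := by
    intro a c
    rw [Finset.sum_neg_distrib, ← Finset.sum_mul, ← mAC a c, Real.negMulLog, neg_mul]
  have hACsum : ∑ i, -(P i * Real.log (μ.prob (fun ω => (A ω, C ω)) (i.1.1, i.2)))
      = μ.H (fun ω => (A ω, C ω)) := by
    unfold FinProbSpace.H
    simp only [Fintype.sum_prod_type]
    calc ∑ a, ∑ b, ∑ c, -(P ((a, b), c)
            * Real.log (μ.prob (fun ω => (A ω, C ω)) (a, c)))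
        = ∑ a, ∑ c, ∑ b, -(P ((a, b), c)
            * Real.log (μ.prob (fun ω => (A ω, C ω)) (a, c))) :=
          Finset.sum_congr rfl fun a _ => Finset.sum_comm
      _ = ∑ a, ∑ c, Real.negMulLog (μ.prob (fun ω => (A ω, C ω)) (a, c)) :=
          Finset.sum_congr rfl fun a _ => Finset.sum_congr rfl fun c _ => innerAC a c
  have innerBC : ∀ b c, (∑ a, -(P ((a, b), c)
        * Real.log (μ.prob (fun ω => (B ω, C ω)) (b, c))))
      = Real.negMulLog (μ.prob (fun ω => (B ω, C ω)) (b, c)) := by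
    intro b c
    rw [Finset.sum_neg_distrib, ← Finset.sum_mul, ← mBC b c, Real.negMulLog, neg_mul]
  have hBCsum : ∑ i, -(P i * Real.log (μ.prob (fun ω => (B ω, C ω)) (i.1.2, i.2)))
      = μ.H (fun ω => (B ω, C ω)) := by
    unfold FinProbSpace.H
    simp only [Fintype.sum_prod_type]
    calc ∑ a, ∑ b, ∑ c, -(P ((a, b), c)
            * Real.log (μ.prob (fun ω => (B ω, C ω)) (b, c)))
        = ∑ b, ∑ a, ∑ c, -(P ((a, b), c)
            * Real.log (μ.prob (fun ω => (B ω, C ω)) (b, c))) := Finset.sum_comm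
      _ = ∑ b, ∑ c, ∑ a, -(P ((a, b), c)
            * Real.log (μ.prob (fun ω => (B ω, C ω)) (b, c))) :=
          Finset.sum_congr rfl fun b _ => Finset.sum_comm
      _ = ∑ b, ∑ c, Real.negMulLog (μ.prob (fun ω => (B ω, C ω)) (b, c)) :=
          Finset.sum_congr rfl fun b _ => Finset.sum_congr rfl fun c _ => innerBC b c
  have hCsum : ∑ i, P i * Real.log (μ.prob C i.2) = - μ.H C := by
    unfold FinProbSpace.H
    simp only [Fintype.sum_prod_type]
    calc ∑ a, ∑ b, ∑ c, P ((a, b), c) * Real.log (μ.prob C c)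
        = ∑ a, ∑ c, ∑ b, P ((a, b), c) * Real.log (μ.prob C c) :=
          Finset.sum_congr rfl fun a _ => Finset.sum_comm
      _ = ∑ c, ∑ a, ∑ b, P ((a, b), c) * Real.log (μ.prob C c) := Finset.sum_comm
      _ = ∑ c, μ.prob C c * Real.log (μ.prob C c) := by
          refine Finset.sum_congr rfl fun c _ => ?_
          rw [mC c, Finset.sum_mul]
          exact Finset.sum_congr rfl fun a _ => (Finset.sum_mul _ _ _).symm
      _ = - ∑ c, Real.negMulLog (μ.prob C c) := by
          rw [← Finset.sum_neg_distrib]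
          exact Finset.sum_congr rfl fun c _ => by rw [Real.negMulLog]; ring
  have hBCsum' : ∑ i, P i * Real.log (μ.prob (fun ω => (B ω, C ω)) (i.1.2, i.2))
      = - μ.H (fun ω => (B ω, C ω)) := by
    rw [← hBCsum, Finset.sum_neg_distrib, neg_neg]
  have hRHS : ∑ i, -(P i * Real.log (Q i))
      = μ.H (fun ω => (A ω, C ω)) + μ.H (fun ω => (B ω, C ω)) - μ.H C := by
    rw [Finset.sum_congr rfl fun i _ => expand i]
    rw [Finset.sum_add_distrib, Finset.sum_sub_distrib, hACsum, hBCsum', hCsum]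
    ring
  have hLHS : ∑ i, Real.negMulLog (P i) = μ.H (fun ω => ((A ω, B ω), C ω)) := rfl
  rw [hLHS, hRHS] at G
  linarith
lemma H_unit (μ : FinProbSpace) : μ.H (fun _ : μ.Ω => PUnit.unit) = 0 := by
  letI := μ.fin
  unfold FinProbSpace.H FinProbSpace.prob
  have h1 : (∑ ω : μ.Ω, μ.p ω) = 1 := μ.sum_one
  simp [h1]

lemma H_subadd (μ : FinProbSpace) {S T : Type} [Fintype S] [DecidableEq S]
    [Fintype T] [DecidableEq T] (X : μ.Ω → S) (Y : μ.Ω → T) :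
    μ.H (fun ω => (X ω, Y ω)) ≤ μ.H X + μ.H Y := by
  have hsub := H_submod μ X Y (fun _ => PUnit.unit)
  have hinj : ∀ (α : Type) [DecidableEq α], Function.Injective (fun a : α => (a, PUnit.unit)) :=
    fun α _ a b h => by simpa using h
  have e1 : μ.H (fun ω => ((X ω, Y ω), PUnit.unit)) = μ.H (fun ω => (X ω, Y ω)) :=
    H_map μ (hinj (S × T)) (fun ω => (X ω, Y ω))
  have e2 : μ.H (fun ω => (X ω, PUnit.unit)) = μ.H X := H_map μ (hinj S) X
  have e3 : μ.H (fun ω => (Y ω, PUnit.unit)) = μ.H Y := H_map μ (hinj T) Y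
  have e4 := H_unit μ
  rw [e1, e2, e3, e4] at hsub
  linarith

lemma key_main (μ : FinProbSpace) {SW SK SE SY : Type}
    [Fintype SW] [DecidableEq SW] [Fintype SK] [DecidableEq SK]
    [Fintype SE] [DecidableEq SE] [Fintype SY] [DecidableEq SY]
    (W : μ.Ω → SW) (K : μ.Ω → SK) (E : μ.Ω → SE) (Y : μ.Ω → SY)
    (hInd : μ.MI W (fun ω => (Y ω, E ω)) = 0)
    (hCorr : μ.Hc W (fun ω => (Y ω, K ω)) = 0)
    (hK : μ.H K ≤ μ.H W) :
    μ.H K = μ.H W ∧ μ.H (fun ω => (K ω, E ω)) = μ.H W + μ.H E := by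
  have F1 : μ.H (fun ω => (W ω, (Y ω, E ω))) = μ.H W + μ.H (fun ω => (Y ω, E ω)) := by
    unfold FinProbSpace.MI at hInd; linarith
  have F2 : μ.H (fun ω => (W ω, (Y ω, K ω))) = μ.H (fun ω => (Y ω, K ω)) := by
    unfold FinProbSpace.Hc at hCorr; linarith
  have F3 : μ.H (fun ω => (W ω, (Y ω, E ω)))
      ≤ μ.H (fun ω => (K ω, (W ω, (Y ω, E ω)))) :=
    H_mono_right μ K (fun ω => (W ω, (Y ω, E ω)))
  have S1 := H_submod μ W E (fun ω => (Y ω, K ω))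
  have r1inj : Function.Injective
      (fun p : (SW × SE) × SY × SK => (p.2.2, (p.1.1, (p.2.1, p.1.2)))) := by
    rintro ⟨⟨w1, e1⟩, y1, k1⟩ ⟨⟨w2, e2⟩, y2, k2⟩ h
    simp only [Prod.mk.injEq] at h ⊢
    tauto
  have r1 : μ.H (fun ω => (K ω, (W ω, (Y ω, E ω))))
      = μ.H (fun ω => ((W ω, E ω), (Y ω, K ω))) :=
    H_map μ r1inj (fun ω => ((W ω, E ω), (Y ω, K ω)))
  have S2 := H_submod μ K Y E
  have r2inj : Function.Injective
      (fun p : (SK × SY) × SE => (p.2, (p.1.2, p.1.1))) := by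
    rintro ⟨⟨k1, y1⟩, e1⟩ ⟨⟨k2, y2⟩, e2⟩ h
    simp only [Prod.mk.injEq] at h ⊢
    tauto
  have r2 : μ.H (fun ω => (E ω, (Y ω, K ω))) = μ.H (fun ω => ((K ω, Y ω), E ω)) :=
    H_map μ r2inj (fun ω => ((K ω, Y ω), E ω))
  have F6 : μ.H (fun ω => (K ω, E ω)) ≤ μ.H K + μ.H E := H_subadd μ K E
  constructor <;> linarith


/-- **Lemma 2 of the paper**: at minimum key storage (`H(Z_q) ≤ H(W)` and
`H(Z_e) ≤ H(W)`), with independence of `W` from `(Z_q, Z_e)`, a signal `X`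
for a qualified set containing `q` but not `e`, and a signal `X'` for a
qualified set containing `e` but not `q`, every key is uniform
(`H(Z_q) = H(Z_e) = H(W)`) and any two keys are independent
(`H(Z_q, Z_e) = 2·H(W)`, i.e. `I(Z_q ; Z_e) = 0`). -/
theorem min_key_storage_keys_uniform_indep
    (μ : FinProbSpace) {SW SZq SZe SX SX' : Type}
    [Fintype SW] [DecidableEq SW] [Fintype SZq] [DecidableEq SZq]
    [Fintype SZe] [DecidableEq SZe] [Fintype SX] [DecidableEq SX]
    [Fintype SX'] [DecidableEq SX']
    (W : μ.Ω → SW) (Zq : μ.Ω → SZq) (Ze : μ.Ω → SZe)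
    (X : μ.Ω → SX) (X' : μ.Ω → SX')
    (hInd : μ.MI W (fun ω => (Zq ω, Ze ω)) = 0)
    (hKeyq : μ.H Zq ≤ μ.H W) (hKeye : μ.H Ze ≤ μ.H W)
    (hCorr : μ.Hc W (fun ω => (X ω, Zq ω)) = 0)
    (hSec : μ.MI W (fun ω => (X ω, Ze ω)) = 0)
    (hCorr' : μ.Hc W (fun ω => (X' ω, Ze ω)) = 0)
    (hSec' : μ.MI W (fun ω => (X' ω, Zq ω)) = 0) :
    μ.H Zq = μ.H W ∧ μ.H Ze = μ.H W
      ∧ μ.H (fun ω => (Zq ω, Ze ω)) = 2 * μ.H W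
      ∧ μ.MI Zq Ze = 0 := by
  obtain ⟨hq1, hq2⟩ := key_main μ W Zq Ze X hSec hCorr hKeyq
  obtain ⟨he1, _⟩ := key_main μ W Ze Zq X' hSec' hCorr' hKeye
  refine ⟨hq1, he1, by linarith, ?_⟩
  unfold FinProbSpace.MI
  linarith
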